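/- Strong duality for the Schmüdgen-type hierarchy of the discrete Gromov-Wasserstein problem: for every positive integer r, lb(L, T(Π(μ,ν)))_r = val(S-DGW-r). -/

import Mathlib

open MvPolynomial

/-- The Riesz functional associated to a moment sequence `z`. -/
noncomputable def riesz {σ : Type*} (z : (σ →₀ ℕ) → ℝ) (p : MvPolynomial σ ℝ) : ℝ :=
  ∑ α ∈ p.support, MvPolynomial.coeff α p * z α

/-- The total degree (length) of a multi-index. -/
def mdeg {σ : Type*} (α : σ →₀ ℕ) : ℕ := α.sum fun _ e => e

/-- Positive semidefiniteness of the truncated localizing matrix `M_t(g z)`: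
the associated quadratic form is nonnegative on coefficient vectors of
polynomials of degree at most `t`. -/
def locPSD {σ : Type*} (z : (σ →₀ ℕ) → ℝ) (g : MvPolynomial σ ℝ) (t : ℕ) : Prop :=
  ∀ p : MvPolynomial σ ℝ, p.totalDegree ≤ t → 0 ≤ riesz z (g * p ^ 2)

/-- Vanishing of the truncated localizing matrix `M_t(g z)`: all entries are zero. -/
def locZero {σ : Type*} (z : (σ →₀ ℕ) → ℝ) (g : MvPolynomial σ ℝ) (t : ℕ) : Prop :=
  ∀ α β : σ →₀ ℕ, mdeg α ≤ t → mdeg β ≤ t →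
    riesz z (g * monomial α 1 * monomial β 1) = 0

/-- The row-marginal polynomial `r_i(π) = ∑_j π_{ij} - μ_i`. -/
noncomputable def rowPoly (a b : ℕ) (μ : Fin a → ℝ) (i : Fin a) :
    MvPolynomial (Fin a × Fin b) ℝ :=
  (∑ j, X (i, j)) - C (μ i)

/-- The column-marginal polynomial `c_j(π) = ∑_i π_{ij} - ν_j`. -/
noncomputable def colPoly (a b : ℕ) (ν : Fin b → ℝ) (j : Fin b) :
    MvPolynomial (Fin a × Fin b) ℝ :=
  (∑ i, X (i, j)) - C (ν j)

/-- The monomial `e_I = ∏_{(i,j) ∈ I} π_{ij}`. -/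
noncomputable def eI {a b : ℕ} (I : Finset (Fin a × Fin b)) : MvPolynomial (Fin a × Fin b) ℝ :=
  ∏ q ∈ I, X q

/-- A probability vector: nonnegative entries summing to 1. -/
def IsProbVec {a : ℕ} (μ : Fin a → ℝ) : Prop := (∀ i, 0 ≤ μ i) ∧ ∑ i, μ i = 1

/-- Feasibility for the level-`r` Schmüdgen moment relaxation (S-DGW-r). -/
def SFeas (a b r : ℕ) (μ : Fin a → ℝ) (ν : Fin b → ℝ)
    (z : ((Fin a × Fin b) →₀ ℕ) → ℝ) : Prop :=
  z 0 = 1 ∧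
  (∀ I : Finset (Fin a × Fin b), I.card ≤ 2 * r → locPSD z (eI I) (r - (I.card + 1) / 2)) ∧
  (∀ i, locZero z (rowPoly a b μ i) (r - 1)) ∧
  (∀ j, locZero z (colPoly a b ν j) (r - 1)) ∧
  (∀ i₁ i₂ : Fin a, ∀ j : Fin b, locZero z (rowPoly a b μ i₁ * X (i₂, j)) (r - 1)) ∧
  (∀ j₁ j₂ : Fin b, ∀ i : Fin a, locZero z (colPoly a b ν j₁ * X (i, j₂)) (r - 1))

/-- The objective of the Schmüdgen moment relaxation. -/
noncomputable def objS (a b : ℕ) (L : Fin a → Fin b → Fin a → Fin b → ℝ)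
    (z : ((Fin a × Fin b) →₀ ℕ) → ℝ) : ℝ :=
  ∑ i, ∑ j, ∑ k, ∑ l, L i j k l * z (Finsupp.single (i, j) 1 + Finsupp.single (k, l) 1)

/-- The optimal value of the level-`r` Schmüdgen moment relaxation. -/
noncomputable def valS (a b r : ℕ) (μ : Fin a → ℝ) (ν : Fin b → ℝ)
    (L : Fin a → Fin b → Fin a → Fin b → ℝ) : ℝ :=
  sInf {v : ℝ | ∃ z, SFeas a b r μ ν z ∧ v = objS a b L z}

/-- A polynomial is SOS if it is a finite sum of squares of polynomials. -/
def IsSOS {σ : Type*} (p : MvPolynomial σ ℝ) : Prop :=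
  ∃ (k : ℕ) (q : Fin k → MvPolynomial σ ℝ), p = ∑ i, q i ^ 2

/-- Membership in the truncated preordering `T(Π(μ,ν))_{2r}`. -/
def InPreT (a b r : ℕ) (μ : Fin a → ℝ) (ν : Fin b → ℝ)
    (f : MvPolynomial (Fin a × Fin b) ℝ) : Prop :=
  ∃ (σ0 : MvPolynomial (Fin a × Fin b) ℝ)
    (σI : Finset (Fin a × Fin b) → MvPolynomial (Fin a × Fin b) ℝ)
    (lam : Fin a → MvPolynomial (Fin a × Fin b) ℝ)
    (th : Fin b → MvPolynomial (Fin a × Fin b) ℝ),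
    IsSOS σ0 ∧ σ0.totalDegree ≤ 2 * r ∧
    (∀ I, IsSOS (σI I) ∧ (eI I * σI I).totalDegree ≤ 2 * r) ∧
    (∀ i, (lam i).totalDegree ≤ 2 * r - 1) ∧
    (∀ j, (th j).totalDegree ≤ 2 * r - 1) ∧
    f = σ0 + ∑ I : Finset (Fin a × Fin b), eI I * σI I
        + ∑ i, lam i * rowPoly a b μ i + ∑ j, th j * colPoly a b ν j

/-- The GW cost as a quadratic polynomial in the variables `π_{ij}`. -/
noncomputable def Lpoly (a b : ℕ) (L : Fin a → Fin b → Fin a → Fin b → ℝ) :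
    MvPolynomial (Fin a × Fin b) ℝ :=
  ∑ i, ∑ j, ∑ k, ∑ l, C (L i j k l) * X (i, j) * X (k, l)

/-- The Schmüdgen SOS lower bound `lb(L, T(Π(μ,ν)))_r`. -/
noncomputable def lbS (a b r : ℕ) (μ : Fin a → ℝ) (ν : Fin b → ℝ)
    (L : Fin a → Fin b → Fin a → Fin b → ℝ) : ℝ :=
  sSup {c : ℝ | InPreT a b r μ ν (Lpoly a b L - C c)}

/-!
Weak duality: the Riesz functional of a feasible `z` is nonnegative on the truncated preordering.
On a generator `e_I σ` this is the localizing condition for `e_I`, because the top homogeneous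
component of a sum of squares cannot cancel, so each square in `σ` has degree at most
`r - ⌈|I|/2⌉`; on `λ r_i` and `θ c_j` the Riesz functional vanishes, since every monomial of
degree `≤ 2r - 1` is a product of two monomials of degree `≤ r - 1`, possibly times one variable.

Strong duality: on polynomials of degree `≤ 2r` the preordering is a convex cone with order
unit `1`. Indeed a monomial with positive coefficient is `e_I` times a square, and
`1 - π^α ∈ T` since `∑ᵢ rᵢ = ∑ π_{ij} - 1` puts `1 - (∑ π_{ij})^k` in the ideal while
`(∑ π_{ij})^{|α|} - π^α` has nonnegative coefficients. Evaluating at `μ ⊗ ν` shows `-1 ∉ T`.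
The M. Riesz extension theorem then yields a functional that is nonnegative on `T`, takes the
value `1` at `1` and at most `lb` at `L`; its moments are feasible with objective `≤ lb`.
-/

section ArchimedeanDuality

variable {E : Type*} [AddCommGroup E] [Module ℝ E] {K : PointedCone ℝ E} {e : E}

lemma PointedCone.bddAbove_setOf_sub_smul_mem (he : ∀ y, ∃ t : ℝ, t • e + y ∈ K)
    (hne : -e ∉ K) (x : E) : BddAbove {t : ℝ | x - t • e ∈ K} := by
  obtain ⟨t₀, ht₀⟩ := he (-x)
  refine ⟨t₀, fun t ht => not_lt.1 fun hlt => hne ?_⟩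
  have h : (t - t₀) • -e ∈ K := by
    convert K.add_mem ht₀ ht using 1
    module
  simpa [smul_smul, inv_mul_cancel₀ (sub_pos.2 hlt).ne'] using
    K.smul_mem (inv_nonneg.2 (sub_pos.2 hlt).le) h

theorem PointedCone.exists_nonneg_functional_le (he : ∀ y, ∃ t : ℝ, t • e + y ∈ K)
    (hne : -e ∉ K) (x : E) :
    ∃ g : E →ₗ[ℝ] ℝ, (∀ y ∈ K, 0 ≤ g y) ∧ g e = 1 ∧ g x ≤ sSup {t : ℝ | x - t • e ∈ K} := by
  set c := sSup {t : ℝ | x - t • e ∈ K}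
  have hc : ∀ t, x - t • e ∈ K → t ≤ c := fun t ht =>
    le_csSup (PointedCone.bddAbove_setOf_sub_smul_mem he hne x) ht
  have he₀ : e ≠ 0 := by
    rintro rfl
    exact hne (by simp)
  -- Being nonnegative on the ray through `c • e - x` as well is what forces `g x ≤ c`.
  set s := K ⊔ PointedCone.hull ℝ {c • e - x}
  set f : E →ₗ.[ℝ] ℝ := LinearPMap.mkSpanSingleton e (1 : ℝ) he₀
  have hdense : ∀ y, ∃ x' : f.domain, (x' : E) + y ∈ s := fun y => by
    obtain ⟨t, ht⟩ := he y
    exact ⟨⟨t • e, Submodule.smul_mem _ _ (Submodule.mem_span_singleton_self e)⟩,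
      Submodule.mem_sup_left ht⟩
  have hnonneg : ∀ x' : f.domain, (x' : E) ∈ s → 0 ≤ f x' := by
    rintro ⟨y, hy⟩ hys
    obtain ⟨t, rfl⟩ := Submodule.mem_span_singleton.1 hy
    obtain ⟨k, hk, w, hw, hkw⟩ := Submodule.mem_sup.1 hys
    obtain ⟨l, rfl⟩ := Submodule.mem_span_singleton.1 hw
    rw [LinearPMap.mkSpanSingleton'_apply, smul_eq_mul, mul_one, RingHom.id_apply]
    have hk' : k = t • e - (l : ℝ) • (c • e - x) := eq_sub_of_add_eq hkw
    rcases l.2.eq_or_lt with hl | hl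
    · by_contra! ht
      refine hne ?_
      convert K.smul_mem (inv_nonneg.2 (neg_nonneg.2 ht.le)) hk using 1
      rw [hk', ← hl, zero_smul, sub_zero, smul_smul, inv_neg, neg_mul,
        inv_mul_cancel₀ ht.ne, neg_smul, one_smul]
    · have hmem : x - (c - t / l) • e ∈ K := by
        convert K.smul_mem (inv_nonneg.2 hl.le) hk using 1
        rw [hk', smul_sub, smul_smul, smul_smul, inv_mul_cancel₀ hl.ne', one_smul]
        module
      have := hc _ hmem
      have : 0 ≤ t / l := by linarith
      simpa using (le_div_iff₀ hl).1 this
  obtain ⟨g, hg, hgs⟩ := riesz_extension s f hnonneg hdense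
  have hge : g e = 1 := (hg ⟨e, Submodule.mem_span_singleton_self e⟩).trans
    (LinearPMap.mkSpanSingleton_apply ..)
  refine ⟨g, fun y hy => hgs y (Submodule.mem_sup_left hy), hge, ?_⟩
  have := hgs _ (Submodule.mem_sup_right (Submodule.subset_span rfl))
  simpa [hge] using this

end ArchimedeanDuality

lemma Finsupp.exists_add_of_degree_le_add {σ : Type*} {α : σ →₀ ℕ} {s t : ℕ}
    (h : α.degree ≤ s + t) : ∃ β γ, α = β + γ ∧ β.degree ≤ s ∧ γ.degree ≤ t := by
  obtain ⟨β, hβα, hβ⟩ := Finsupp.exists_le_degree_eq α (min s α.degree) (min_le_right _ _)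
  obtain ⟨γ, rfl⟩ := le_iff_exists_add.1 hβα
  rw [map_add] at h hβ
  exact ⟨β, γ, rfl, by omega, by omega⟩

lemma Finsupp.eq_zero_or_exists_eq_single_of_degree_le_one {σ : Type*} {δ : σ →₀ ℕ}
    (h : δ.degree ≤ 1) : δ = 0 ∨ ∃ q, δ = Finsupp.single q 1 := by
  rcases Nat.le_one_iff_eq_zero_or_eq_one.1 h with h | h
  · exact .inl ((Finsupp.degree_eq_zero_iff δ).1 h)
  · exact .inr ((Finsupp.sum_eq_one_iff δ).1 h)

section Riesz

variable {σ : Type*} (z : (σ →₀ ℕ) → ℝ)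

noncomputable def lriesz : MvPolynomial σ ℝ →ₗ[ℝ] ℝ :=
  Finsupp.linearCombination ℝ z ∘ₗ (AddMonoidAlgebra.coeffLinearEquiv ℝ).toLinearMap

lemma lriesz_apply (p : MvPolynomial σ ℝ) : lriesz z p = riesz z p := by
  simp [lriesz, riesz, Finsupp.linearCombination_apply, Finsupp.sum, mul_comm]
  rfl

lemma riesz_monomial (α : σ →₀ ℕ) (c : ℝ) : riesz z (monomial α c) = c * z α := by
  classical
  by_cases hc : c = 0
  · simp [riesz, hc]
  · simp [riesz, support_monomial, hc]

lemma riesz_C (c : ℝ) : riesz z (C c) = c * z 0 := riesz_monomial z 0 c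

lemma riesz_moments (G : MvPolynomial σ ℝ →ₗ[ℝ] ℝ) (p : MvPolynomial σ ℝ) :
    riesz (fun α => G (monomial α 1)) p = G p := by
  rw [← lriesz_apply]
  congr 1
  refine linearMap_ext fun α => LinearMap.ext_ring ?_
  simp [lriesz_apply, riesz_monomial]

variable {z}

lemma riesz_mul_eq_zero_of_monomial_mul {g : MvPolynomial σ ℝ} {N : ℕ}
    (h : ∀ α : σ →₀ ℕ, α.degree ≤ N → riesz z (monomial α 1 * g) = 0)
    {p : MvPolynomial σ ℝ} (hp : p.totalDegree ≤ N) : riesz z (p * g) = 0 := by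
  rw [p.as_sum, Finset.sum_mul, ← lriesz_apply, map_sum]
  refine Finset.sum_eq_zero fun α hα => ?_
  have : monomial α (coeff α p) * g = coeff α p • (monomial α 1 * g) := by
    rw [← smul_mul_assoc, smul_monomial, smul_eq_mul, mul_one]
  rw [this, map_smul, lriesz_apply, h α ((le_totalDegree hα).trans hp), smul_zero]

end Riesz

section SumOfSquares

variable {σ : Type*}

lemma IsSOS.zero : IsSOS (0 : MvPolynomial σ ℝ) := ⟨0, Fin.elim0, by simp⟩

lemma IsSOS.sq (p : MvPolynomial σ ℝ) : IsSOS (p ^ 2) := ⟨1, fun _ => p, by simp⟩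

lemma IsSOS.add {p q : MvPolynomial σ ℝ} (hp : IsSOS p) (hq : IsSOS q) : IsSOS (p + q) := by
  obtain ⟨k, u, rfl⟩ := hp
  obtain ⟨l, v, rfl⟩ := hq
  exact ⟨k + l, Fin.append u v, by simp [Fin.sum_univ_add]⟩

lemma IsSOS.smul {c : ℝ} (hc : 0 ≤ c) {p : MvPolynomial σ ℝ} (hp : IsSOS p) : IsSOS (c • p) := by
  obtain ⟨k, q, rfl⟩ := hp
  exact ⟨k, fun i => Real.sqrt c • q i, by simp [Finset.smul_sum, smul_pow, Real.sq_sqrt hc]⟩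

lemma IsSOS.eval_nonneg {p : MvPolynomial σ ℝ} (hp : IsSOS p) (x : σ → ℝ) : 0 ≤ eval x p := by
  obtain ⟨k, q, rfl⟩ := hp
  simpa using Finset.sum_nonneg fun i _ => sq_nonneg (eval x (q i))

lemma homogeneousComponent_add_mul {R : Type*} [CommSemiring R] {p q : MvPolynomial σ R} {a b : ℕ}
    (hp : p.totalDegree ≤ a) (hq : q.totalDegree ≤ b) :
    homogeneousComponent (a + b) (p * q) = homogeneousComponent a p * homogeneousComponent b q := by
  classical
  have hzero : ∀ x : (σ →₀ ℕ) × (σ →₀ ℕ), x.1.degree + x.2.degree = a + b →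
      ¬(x.1.degree = a ∧ x.2.degree = b) → coeff x.1 p * coeff x.2 q = 0 := by
    intro x hsum hx
    rcases lt_or_gt_of_ne (show x.1.degree ≠ a by omega) with h | h
    · rw [coeff_eq_zero_of_totalDegree_lt (f := q) (by change _ < x.2.degree; omega), mul_zero]
    · rw [coeff_eq_zero_of_totalDegree_lt (f := p) (by change _ < x.1.degree; omega), zero_mul]
  ext d
  rw [coeff_homogeneousComponent, coeff_mul, coeff_mul]
  split_ifs with hd
  · refine Finset.sum_congr rfl fun x hx => ?_
    have hsum : x.1.degree + x.2.degree = a + b := by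
      rw [← map_add, Finset.HasAntidiagonal.mem_antidiagonal.1 hx, hd]
    simp only [coeff_homogeneousComponent]
    by_cases h : x.1.degree = a ∧ x.2.degree = b
    · rw [if_pos h.1, if_pos h.2]
    · rw [hzero x hsum h]
      split_ifs <;> simp_all
  · refine (Finset.sum_eq_zero fun x hx => ?_).symm
    have hsum : x.1.degree + x.2.degree = d.degree := by
      rw [← map_add, Finset.HasAntidiagonal.mem_antidiagonal.1 hx]
    simp only [coeff_homogeneousComponent]
    split_ifs <;> simp_all

lemma homogeneousComponent_totalDegree_ne_zero {R : Type*} [CommSemiring R]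
    {p : MvPolynomial σ R} (hp : p ≠ 0) : homogeneousComponent p.totalDegree p ≠ 0 := by
  obtain ⟨d, hd, hdeg⟩ := Finset.exists_mem_eq_sup p.support (support_nonempty.2 hp)
    fun s => s.sum fun _ e => e
  have hdeg' : d.degree = p.totalDegree := hdeg.symm
  intro h
  have := congrArg (coeff d) h
  rw [coeff_homogeneousComponent, if_pos hdeg', coeff_zero] at this
  exact mem_support_iff.1 hd this

lemma eq_zero_of_sum_sq_eq_zero {ι : Type*} [Fintype ι] {q : ι → MvPolynomial σ ℝ}
    (h : ∑ i, q i ^ 2 = 0) (i : ι) : q i = 0 := by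
  refine MvPolynomial.funext fun x => ?_
  have hx : ∑ j, eval x (q j) ^ 2 = 0 := by simpa using congrArg (eval x) h
  simpa using (Finset.sum_eq_zero_iff_of_nonneg fun j _ => sq_nonneg _).1 hx i
    (Finset.mem_univ i)

lemma two_mul_totalDegree_le_totalDegree_sum_sq {ι : Type*} [Fintype ι]
    (q : ι → MvPolynomial σ ℝ) (i : ι) :
    2 * (q i).totalDegree ≤ (∑ j, q j ^ 2).totalDegree := by
  obtain ⟨j, -, hj⟩ := Finset.exists_max_image Finset.univ (fun j => (q j).totalDegree)
    ⟨i, Finset.mem_univ i⟩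
  have hi := hj i (Finset.mem_univ i)
  rcases eq_or_ne (q j) 0 with h0 | h0
  · rw [h0, totalDegree_zero] at hi
    omega
  set D := (q j).totalDegree
  have hcomp : homogeneousComponent (D + D) (∑ k, q k ^ 2)
      = ∑ k, homogeneousComponent D (q k) ^ 2 := by
    rw [map_sum]
    refine Finset.sum_congr rfl fun k hk => ?_
    rw [sq, sq, homogeneousComponent_add_mul (hj k hk) (hj k hk)]
  have hne : ∑ k, homogeneousComponent D (q k) ^ 2 ≠ 0 := fun h =>
    homogeneousComponent_totalDegree_ne_zero h0 (eq_zero_of_sum_sq_eq_zero h j)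
  have : D + D ≤ (∑ k, q k ^ 2).totalDegree := by
    by_contra! hlt
    exact hne (hcomp ▸ homogeneousComponent_eq_zero _ _ hlt)
  omega

end SumOfSquares

section eI

variable {a b : ℕ}

lemma eI_eq_monomial (I : Finset (Fin a × Fin b)) :
    eI I = monomial (∑ q ∈ I, Finsupp.single q 1) 1 := by
  rw [monomial_sum_one]
  rfl

lemma eI_ne_zero (I : Finset (Fin a × Fin b)) : eI I ≠ 0 := by
  rw [eI_eq_monomial]
  exact monomial_eq_zero.not.2 one_ne_zero

lemma totalDegree_eI (I : Finset (Fin a × Fin b)) : (eI I).totalDegree = I.card := by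
  rw [eI_eq_monomial, totalDegree_monomial _ one_ne_zero]
  change Finsupp.degree _ = _
  simp

end eI

section WeakDuality

variable {a b r : ℕ} {μ : Fin a → ℝ} {ν : Fin b → ℝ}

lemma riesz_eI_mul_nonneg {z : ((Fin a × Fin b) →₀ ℕ) → ℝ}
    (hz : ∀ I : Finset (Fin a × Fin b), I.card ≤ 2 * r → locPSD z (eI I) (r - (I.card + 1) / 2))
    {I : Finset (Fin a × Fin b)} {s : MvPolynomial (Fin a × Fin b) ℝ} (hs : IsSOS s)
    (hdeg : (eI I * s).totalDegree ≤ 2 * r) : 0 ≤ riesz z (eI I * s) := by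
  obtain ⟨k, q, rfl⟩ := hs
  rcases eq_or_ne (∑ i, q i ^ 2) 0 with h0 | h0
  · simp [h0, riesz]
  rw [totalDegree_mul_of_isDomain (eI_ne_zero I) h0, totalDegree_eI] at hdeg
  rw [Finset.mul_sum, ← lriesz_apply, map_sum]
  refine Finset.sum_nonneg fun i _ => ?_
  have := two_mul_totalDegree_le_totalDegree_sum_sq q i
  rw [lriesz_apply]
  exact hz I (by omega) (q i) (by omega)

lemma riesz_mul_eq_zero_of_locZero {σ : Type*} {z : (σ →₀ ℕ) → ℝ} {g : MvPolynomial σ ℝ}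
    {t : ℕ} (h₀ : locZero z g t) (h₁ : ∀ q, locZero z (g * X q) t) {p : MvPolynomial σ ℝ}
    (hp : p.totalDegree ≤ 2 * t + 1) : riesz z (p * g) = 0 := by
  refine riesz_mul_eq_zero_of_monomial_mul (fun α hα => ?_) hp
  obtain ⟨δ, ρ, rfl, hδ, hρ⟩ := Finsupp.exists_add_of_degree_le_add (α := α) (s := 1) (t := t + t)
    (by omega)
  obtain ⟨β, γ, rfl, hβ, hγ⟩ := Finsupp.exists_add_of_degree_le_add hρ
  rcases Finsupp.eq_zero_or_exists_eq_single_of_degree_le_one hδ with rfl | ⟨q, rfl⟩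
  · convert h₀ β γ hβ hγ using 2
    rw [zero_add, show monomial (β + γ) (1 : ℝ) = monomial β 1 * monomial γ 1 by
      rw [monomial_mul, one_mul]]
    ring
  · convert h₁ q β γ hβ hγ using 2
    rw [show monomial (Finsupp.single q 1 + (β + γ)) (1 : ℝ) = X q * monomial β 1 * monomial γ 1 by
      rw [X, monomial_mul, monomial_mul, one_mul, one_mul, add_assoc]]
    ring

theorem SFeas.riesz_nonneg {z : ((Fin a × Fin b) →₀ ℕ) → ℝ}
    (hz : SFeas a b r μ ν z) {f : MvPolynomial (Fin a × Fin b) ℝ} (hf : InPreT a b r μ ν f) :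
    0 ≤ riesz z f := by
  obtain ⟨-, hpsd, hrow, hcol, hrowX, hcolX⟩ := hz
  obtain ⟨σ₀, σI, lam, th, hσ₀, hdeg₀, hσI, hlam, hth, rfl⟩ := hf
  have h₀ : 0 ≤ riesz z σ₀ := by
    simpa [eI] using riesz_eI_mul_nonneg hpsd (I := ∅) hσ₀ (by simpa [eI] using hdeg₀)
  have hI : ∀ I, 0 ≤ riesz z (eI I * σI I) := fun I =>
    riesz_eI_mul_nonneg hpsd (hσI I).1 (hσI I).2
  have hrow' : ∀ i, riesz z (lam i * rowPoly a b μ i) = 0 := fun i =>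
    riesz_mul_eq_zero_of_locZero (hrow i) (fun q => hrowX i q.1 q.2) ((hlam i).trans (by omega))
  have hcol' : ∀ j, riesz z (th j * colPoly a b ν j) = 0 := fun j =>
    riesz_mul_eq_zero_of_locZero (hcol j) (fun q => hcolX j q.2 q.1) ((hth j).trans (by omega))
  simp only [← lriesz_apply, map_add, map_sum] at h₀ hI hrow' hcol' ⊢
  simp only [hrow', hcol', Finset.sum_const_zero, add_zero]
  exact add_nonneg h₀ (Finset.sum_nonneg fun I _ => hI I)

end WeakDuality

section Cone

variable {a b r : ℕ} {μ : Fin a → ℝ} {ν : Fin b → ℝ}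

lemma InPreT.add {f g : MvPolynomial (Fin a × Fin b) ℝ} (hf : InPreT a b r μ ν f)
    (hg : InPreT a b r μ ν g) : InPreT a b r μ ν (f + g) := by
  obtain ⟨σ₀, σI, lam, th, hσ₀, hd₀, hσI, hlam, hth, rfl⟩ := hf
  obtain ⟨σ₀', σI', lam', th', hσ₀', hd₀', hσI', hlam', hth', rfl⟩ := hg
  refine ⟨σ₀ + σ₀', σI + σI', lam + lam', th + th', hσ₀.add hσ₀',
    (totalDegree_add _ _).trans (max_le hd₀ hd₀'), fun I => ⟨(hσI I).1.add (hσI' I).1, ?_⟩,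
    fun i => (totalDegree_add _ _).trans (max_le (hlam i) (hlam' i)),
    fun j => (totalDegree_add _ _).trans (max_le (hth j) (hth' j)), ?_⟩
  · rw [Pi.add_apply, mul_add]
    exact (totalDegree_add _ _).trans (max_le (hσI I).2 (hσI' I).2)
  · simp only [Pi.add_apply, mul_add, add_mul, Finset.sum_add_distrib]
    ring

lemma InPreT.smul {c : ℝ} (hc : 0 ≤ c) {f : MvPolynomial (Fin a × Fin b) ℝ}
    (hf : InPreT a b r μ ν f) : InPreT a b r μ ν (c • f) := by
  obtain ⟨σ₀, σI, lam, th, hσ₀, hd₀, hσI, hlam, hth, rfl⟩ := hf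
  refine ⟨c • σ₀, c • σI, c • lam, c • th, hσ₀.smul hc, (totalDegree_smul_le _ _).trans hd₀,
    fun I => ⟨(hσI I).1.smul hc, ?_⟩, fun i => (totalDegree_smul_le _ _).trans (hlam i),
    fun j => (totalDegree_smul_le _ _).trans (hth j), ?_⟩
  · rw [Pi.smul_apply, mul_smul_comm]
    exact (totalDegree_smul_le _ _).trans (hσI I).2
  · simp only [Pi.smul_apply, smul_add, Finset.smul_sum, smul_mul_assoc, mul_smul_comm]

variable (a b r μ ν) in
def preordering : PointedCone ℝ (MvPolynomial (Fin a × Fin b) ℝ) where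
  carrier := {f | InPreT a b r μ ν f}
  zero_mem' := ⟨0, 0, 0, 0, .zero, by simp, fun _ => ⟨.zero, by simp⟩, by simp, by simp, by simp⟩
  add_mem' := InPreT.add
  smul_mem' c _ hf := InPreT.smul c.2 hf

lemma mem_preordering {f : MvPolynomial (Fin a × Fin b) ℝ} :
    f ∈ preordering a b r μ ν ↔ InPreT a b r μ ν f := Iff.rfl

lemma eI_mul_mem_preordering {I : Finset (Fin a × Fin b)} {s : MvPolynomial (Fin a × Fin b) ℝ}
    (hs : IsSOS s) (hdeg : (eI I * s).totalDegree ≤ 2 * r) :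
    eI I * s ∈ preordering a b r μ ν := by
  classical
  refine ⟨0, Pi.single I s, 0, 0, .zero, by simp, fun J => ?_, by simp, by simp, ?_⟩
  · rcases eq_or_ne J I with rfl | hJ
    · simpa using ⟨hs, hdeg⟩
    · simpa [hJ] using IsSOS.zero
  · simp [Pi.single_apply]

lemma mul_rowPoly_mem_preordering {p : MvPolynomial (Fin a × Fin b) ℝ}
    (hp : p.totalDegree ≤ 2 * r - 1) (i : Fin a) :
    p * rowPoly a b μ i ∈ preordering a b r μ ν := by
  classical
  refine ⟨0, 0, Pi.single i p, 0, .zero, by simp, fun _ => ⟨.zero, by simp⟩, fun i' => ?_,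
    by simp, ?_⟩
  · rcases eq_or_ne i' i with rfl | hi
    · simpa using hp
    · simp [hi]
  · simp [Pi.single_apply]

lemma mul_colPoly_mem_preordering {p : MvPolynomial (Fin a × Fin b) ℝ}
    (hp : p.totalDegree ≤ 2 * r - 1) (j : Fin b) :
    p * colPoly a b ν j ∈ preordering a b r μ ν := by
  classical
  refine ⟨0, 0, 0, Pi.single j p, .zero, by simp, fun _ => ⟨.zero, by simp⟩, by simp,
    fun j' => ?_, ?_⟩
  · rcases eq_or_ne j' j with rfl | hj
    · simpa using hp
    · simp [hj]
  · simp [Pi.single_apply]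

lemma totalDegree_rowPoly_le (i : Fin a) : (rowPoly a b μ i).totalDegree ≤ 1 :=
  (totalDegree_sub _ _).trans <| max_le
    ((totalDegree_finsetSum _ _).trans <| Finset.sup_le fun j _ => (totalDegree_X _).le)
    (by simp)

lemma totalDegree_colPoly_le (j : Fin b) : (colPoly a b ν j).totalDegree ≤ 1 :=
  (totalDegree_sub _ _).trans <| max_le
    ((totalDegree_finsetSum _ _).trans <| Finset.sup_le fun i _ => (totalDegree_X _).le)
    (by simp)

lemma totalDegree_le_of_mem_preordering (hr : 0 < r) {f : MvPolynomial (Fin a × Fin b) ℝ}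
    (hf : f ∈ preordering a b r μ ν) : f.totalDegree ≤ 2 * r := by
  obtain ⟨σ₀, σI, lam, th, -, hd₀, hσI, hlam, hth, rfl⟩ := hf
  have hmul : ∀ {p q : MvPolynomial (Fin a × Fin b) ℝ}, p.totalDegree ≤ 2 * r - 1 →
      q.totalDegree ≤ 1 → (p * q).totalDegree ≤ 2 * r := fun hp hq =>
    (totalDegree_mul _ _).trans (by omega)
  refine (totalDegree_add _ _).trans (max_le ((totalDegree_add _ _).trans (max_le
    ((totalDegree_add _ _).trans (max_le hd₀ ?_)) ?_)) ?_) <;>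
    refine (totalDegree_finsetSum _ _).trans (Finset.sup_le fun k _ => ?_)
  exacts [(hσI k).2, hmul (hlam k) (totalDegree_rowPoly_le k),
    hmul (hth k) (totalDegree_colPoly_le k)]

end Cone

section OrderUnit

variable {a b r : ℕ} {μ : Fin a → ℝ} {ν : Fin b → ℝ}

lemma monomial_mem_preordering {d : (Fin a × Fin b) →₀ ℕ} (hd : d.degree ≤ 2 * r) {c : ℝ}
    (hc : 0 ≤ c) : monomial d c ∈ preordering a b r μ ν := by
  classical
  set h := Finsupp.mapRange (· / 2) (Nat.zero_div 2) d
  set I := Finset.univ.filter fun q => d q % 2 = 1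
  have hexp : ∑ q ∈ I, Finsupp.single q 1 + (h + h) = d := by
    ext q
    simp only [Finsupp.add_apply, Finsupp.finsetSum_apply, Finsupp.single_apply,
      Finset.sum_ite_eq', h, I, Finsupp.mapRange_apply, Finset.mem_filter, Finset.mem_univ,
      true_and]
    split_ifs <;> omega
  have hdecomp : monomial d c = eI I * monomial h (Real.sqrt c) ^ 2 := by
    rw [eI_eq_monomial, sq, monomial_mul, monomial_mul, one_mul, Real.mul_self_sqrt hc, hexp]
  rw [hdecomp]
  refine eI_mul_mem_preordering (.sq _) ?_
  rw [← hdecomp]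
  exact (totalDegree_monomial_le _ _).trans hd

lemma mem_preordering_of_coeff_nonneg {f : MvPolynomial (Fin a × Fin b) ℝ}
    (hf : ∀ d, 0 ≤ coeff d f) (hdeg : f.totalDegree ≤ 2 * r) : f ∈ preordering a b r μ ν := by
  rw [f.as_sum]
  exact Submodule.sum_mem _ fun d hd =>
    monomial_mem_preordering ((le_totalDegree hd).trans hdeg) (hf d)

lemma sum_rowPoly (hμ : ∑ i, μ i = 1) :
    ∑ i, rowPoly a b μ i = ∑ q, X q - 1 := by
  simp only [rowPoly, Finset.sum_sub_distrib, ← map_sum, hμ, map_one, Fintype.sum_prod_type]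

lemma totalDegree_sum_X_le : (∑ q, X q : MvPolynomial (Fin a × Fin b) ℝ).totalDegree ≤ 1 :=
  (totalDegree_finsetSum _ _).trans (Finset.sup_le fun q _ => (totalDegree_X q).le)

lemma one_sub_sum_X_pow_mem_preordering (hμ : ∑ i, μ i = 1) {k : ℕ} (hk : k ≤ 2 * r) :
    1 - (∑ q, X q) ^ k ∈ preordering a b r μ ν := by
  set G : MvPolynomial (Fin a × Fin b) ℝ := ∑ j ∈ Finset.range k, (∑ q, X q) ^ j
  have hG : (-G).totalDegree ≤ 2 * r - 1 := by
    rw [totalDegree_neg]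
    refine (totalDegree_finsetSum _ _).trans (Finset.sup_le fun j hj => ?_)
    have := Finset.mem_range.1 hj
    exact (totalDegree_pow _ _).trans
      ((Nat.mul_le_mul_left j totalDegree_sum_X_le).trans (by omega))
  have hsum : ∑ i, -G * rowPoly a b μ i = 1 - (∑ q, X q) ^ k := by
    rw [← Finset.mul_sum, sum_rowPoly hμ, neg_mul, geom_sum_mul, neg_sub]
  rw [← hsum]
  exact Submodule.sum_mem _ fun i _ => mul_rowPoly_mem_preordering hG i

lemma sum_X_pow_sub_monomial_mem_preordering {d : (Fin a × Fin b) →₀ ℕ}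
    (hd : d.degree ≤ 2 * r) : (∑ q, X q) ^ d.degree - monomial d 1 ∈ preordering a b r μ ν := by
  classical
  refine mem_preordering_of_coeff_nonneg (fun e => ?_) ?_
  · rw [coeff_sub, coeff_sum_X_pow_of_fintype, coeff_monomial]
    rcases eq_or_ne d e with rfl | hde
    · rw [if_pos rfl, if_pos (show (d.sum fun _ m => m) = d.degree from rfl), sub_nonneg,
        Nat.one_le_cast, Finsupp.multinomial_eq]
      exact Nat.multinomial_pos _ _
    · rw [if_neg hde, sub_zero]
      split_ifs <;> positivity
  · refine (totalDegree_sub _ _).trans (max_le ?_ ((totalDegree_monomial_le _ _).trans hd))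
    exact (totalDegree_pow _ _).trans ((Nat.mul_le_mul_left _ totalDegree_sum_X_le).trans
      (by simpa using hd))

lemma C_abs_add_monomial_mem_preordering (hμ : ∑ i, μ i = 1) {d : (Fin a × Fin b) →₀ ℕ}
    (hd : d.degree ≤ 2 * r) (w : ℝ) : C |w| + monomial d w ∈ preordering a b r μ ν := by
  have hone : 1 - monomial d 1 ∈ preordering a b r μ ν := by
    simpa using Submodule.add_mem _ (one_sub_sum_X_pow_mem_preordering hμ hd)
      (sum_X_pow_sub_monomial_mem_preordering hd)
  have hsplit : C |w| + monomial d w = |w| • (1 - monomial d 1) + monomial d (|w| + w) := by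
    rw [smul_sub, smul_monomial, smul_eq_mul, mul_one, smul_eq_C_mul, mul_one, map_add]
    ring
  rw [hsplit]
  exact Submodule.add_mem _ (PointedCone.smul_mem _ (abs_nonneg w) hone)
    (monomial_mem_preordering hd (by linarith [neg_abs_le w]))

lemma exists_C_add_mem_preordering (hμ : ∑ i, μ i = 1) {y : MvPolynomial (Fin a × Fin b) ℝ}
    (hy : y.totalDegree ≤ 2 * r) : ∃ t, C t + y ∈ preordering a b r μ ν := by
  refine ⟨∑ d ∈ y.support, |coeff d y|, ?_⟩
  have hsum : C (∑ d ∈ y.support, |coeff d y|) + y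
      = ∑ d ∈ y.support, (C |coeff d y| + monomial d (coeff d y)) := by
    rw [Finset.sum_add_distrib, map_sum, ← y.as_sum]
  rw [hsum]
  exact Submodule.sum_mem _ fun d hd =>
    C_abs_add_monomial_mem_preordering hμ ((le_totalDegree hd).trans hy) _

end OrderUnit

section ProductPoint

variable {a b r : ℕ} {μ : Fin a → ℝ} {ν : Fin b → ℝ}

lemma eval_rowPoly_product (hν : ∑ j, ν j = 1) (i : Fin a) :
    eval (fun q : Fin a × Fin b => μ q.1 * ν q.2) (rowPoly a b μ i) = 0 := by
  simp [rowPoly, ← Finset.mul_sum, hν]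

lemma eval_colPoly_product (hμ : ∑ i, μ i = 1) (j : Fin b) :
    eval (fun q : Fin a × Fin b => μ q.1 * ν q.2) (colPoly a b ν j) = 0 := by
  simp [colPoly, ← Finset.sum_mul, hμ]

lemma eval_product_nonneg_of_mem_preordering (hμ : IsProbVec μ) (hν : IsProbVec ν)
    {f : MvPolynomial (Fin a × Fin b) ℝ} (hf : f ∈ preordering a b r μ ν) :
    0 ≤ eval (fun q : Fin a × Fin b => μ q.1 * ν q.2) f := by
  obtain ⟨σ₀, σI, lam, th, hσ₀, -, hσI, -, -, rfl⟩ := hf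
  have heI : ∀ I, 0 ≤ eval (fun q : Fin a × Fin b => μ q.1 * ν q.2) (eI I) := fun I =>
    by simpa [eI] using Finset.prod_nonneg fun q _ => mul_nonneg (hμ.1 q.1) (hν.1 q.2)
  simp only [map_add, map_sum, map_mul, eval_rowPoly_product hν.2, eval_colPoly_product hμ.2,
    mul_zero, Finset.sum_const_zero, add_zero]
  exact add_nonneg (hσ₀.eval_nonneg _) (Finset.sum_nonneg fun I _ =>
    mul_nonneg (heI I) ((hσI I).1.eval_nonneg _))

lemma neg_one_notMem_preordering (hμ : IsProbVec μ) (hν : IsProbVec ν) :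
    -1 ∉ preordering a b r μ ν := fun h =>
  absurd (eval_product_nonneg_of_mem_preordering hμ hν h) (by simp)

end ProductPoint

section Converse

variable {a b r : ℕ} {μ : Fin a → ℝ} {ν : Fin b → ℝ}

lemma locZero_mul_of_riesz_mul_eq_zero {σ : Type*} {z : (σ →₀ ℕ) → ℝ} {g : MvPolynomial σ ℝ}
    {N : ℕ} (hg : ∀ p : MvPolynomial σ ℝ, p.totalDegree ≤ N → riesz z (p * g) = 0)
    {h : MvPolynomial σ ℝ} {t : ℕ} (hh : h.totalDegree + 2 * t ≤ N) : locZero z (g * h) t := by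
  intro α β hα hβ
  have hα' : (monomial α (1 : ℝ)).totalDegree ≤ t := (totalDegree_monomial_le α 1).trans hα
  have hβ' : (monomial β (1 : ℝ)).totalDegree ≤ t := (totalDegree_monomial_le β 1).trans hβ
  have hdeg : (h * monomial α 1 * monomial β 1).totalDegree ≤ N :=
    (totalDegree_mul _ _).trans <| (Nat.add_le_add_right (totalDegree_mul _ _) _).trans (by omega)
  rw [← hg _ hdeg]
  ring_nf

theorem sFeas_of_riesz_nonneg (hr : 0 < r) {z : ((Fin a × Fin b) →₀ ℕ) → ℝ} (hz₀ : z 0 = 1)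
    (hz : ∀ f ∈ preordering a b r μ ν, 0 ≤ riesz z f) : SFeas a b r μ ν z := by
  have hvanish : ∀ {g : MvPolynomial (Fin a × Fin b) ℝ},
      (∀ p : MvPolynomial (Fin a × Fin b) ℝ, p.totalDegree ≤ 2 * r - 1 →
        p * g ∈ preordering a b r μ ν) →
      ∀ p : MvPolynomial (Fin a × Fin b) ℝ, p.totalDegree ≤ 2 * r - 1 → riesz z (p * g) = 0 := by
    intro g hg p hp
    have h₁ := hz _ (hg p hp)
    have h₂ := hz _ (hg (-p) (by rwa [totalDegree_neg]))
    rw [neg_mul, ← lriesz_apply, map_neg, lriesz_apply] at h₂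
    linarith
  have hrow := fun i => hvanish fun p hp => mul_rowPoly_mem_preordering (μ := μ) (ν := ν) hp i
  have hcol := fun j => hvanish fun p hp => mul_colPoly_mem_preordering (μ := μ) (ν := ν) hp j
  refine ⟨hz₀, fun I hI p hp => hz _ (eI_mul_mem_preordering (.sq p) ?_), fun i => ?_,
    fun j => ?_, fun i₁ i₂ j => ?_, fun j₁ j₂ i => ?_⟩
  · have := totalDegree_pow p 2
    exact (totalDegree_mul _ _).trans (by rw [totalDegree_eI]; omega)
  · simpa using locZero_mul_of_riesz_mul_eq_zero (hrow i) (h := 1) (by simp; omega)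
  · simpa using locZero_mul_of_riesz_mul_eq_zero (hcol j) (h := 1) (by simp; omega)
  · exact locZero_mul_of_riesz_mul_eq_zero (hrow i₁) (by rw [totalDegree_X]; omega)
  · exact locZero_mul_of_riesz_mul_eq_zero (hcol j₁) (by rw [totalDegree_X]; omega)

end Converse

section Duality

variable {a b r : ℕ} {μ : Fin a → ℝ} {ν : Fin b → ℝ} (L : Fin a → Fin b → Fin a → Fin b → ℝ)

lemma totalDegree_Lpoly_le : (Lpoly a b L).totalDegree ≤ 2 := by
  refine (totalDegree_finsetSum _ _).trans (Finset.sup_le fun i _ => ?_)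
  refine (totalDegree_finsetSum _ _).trans (Finset.sup_le fun j _ => ?_)
  refine (totalDegree_finsetSum _ _).trans (Finset.sup_le fun k _ => ?_)
  refine (totalDegree_finsetSum _ _).trans (Finset.sup_le fun l _ => ?_)
  have : (C (L i j k l) * X (i, j)).totalDegree ≤ 1 :=
    (totalDegree_mul _ _).trans (by rw [totalDegree_C, totalDegree_X])
  exact (totalDegree_mul _ _).trans (by rw [totalDegree_X]; omega)

lemma riesz_Lpoly (z : ((Fin a × Fin b) →₀ ℕ) → ℝ) : riesz z (Lpoly a b L) = objS a b L z := by
  simp only [Lpoly, objS, ← lriesz_apply, map_sum]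
  simp [lriesz_apply, X, C_mul_monomial, monomial_mul, riesz_monomial]

lemma SFeas.le_objS {z : ((Fin a × Fin b) →₀ ℕ) → ℝ} (hz : SFeas a b r μ ν z)
    {c : ℝ} (hc : InPreT a b r μ ν (Lpoly a b L - C c)) : c ≤ objS a b L z := by
  have := hz.riesz_nonneg hc
  rw [← lriesz_apply, map_sub, lriesz_apply, lriesz_apply, riesz_Lpoly, riesz_C, hz.1] at this
  linarith

theorem exists_sFeas_objS_le_lbS (hr : 0 < r) (hμ : IsProbVec μ) (hν : IsProbVec ν) :
    ∃ z, SFeas a b r μ ν z ∧ objS a b L z ≤ lbS a b r μ ν L := by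
  set V := restrictTotalDegree (Fin a × Fin b) ℝ (2 * r)
  have hV : ∀ {f}, f ∈ V ↔ f.totalDegree ≤ 2 * r := mem_restrictTotalDegree _ _ _
  set K : PointedCone ℝ V := (preordering a b r μ ν).comap V.subtype
  let e : V := ⟨1, hV.2 (by simp)⟩
  let x : V := ⟨Lpoly a b L, hV.2 ((totalDegree_Lpoly_le L).trans (by omega))⟩
  have he : ∀ y : V, ∃ t : ℝ, t • e + y ∈ K := fun y => by
    obtain ⟨t, ht⟩ := exists_C_add_mem_preordering hμ.2 (hV.1 y.2)
    exact ⟨t, by simpa [K, e, smul_eq_C_mul] using ht⟩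
  have hne : -e ∉ K := by simpa [K, e] using neg_one_notMem_preordering hμ hν
  obtain ⟨g, hg, hge, hgx⟩ := PointedCone.exists_nonneg_functional_le he hne x
  obtain ⟨G, hG⟩ := LinearMap.exists_extend g
  have hGg : ∀ y : V, G y = g y := fun y => LinearMap.congr_fun hG y
  refine ⟨fun α => G (monomial α 1), sFeas_of_riesz_nonneg hr ?_ fun f hf => ?_, ?_⟩
  · rw [monomial_zero', C_1]
    exact (hGg e).trans hge
  · rw [riesz_moments]
    exact (hGg ⟨f, hV.2 (totalDegree_le_of_mem_preordering hr hf)⟩).symm ▸ hg _ hf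
  · rw [← riesz_Lpoly, riesz_moments, hGg x]
    refine hgx.trans_eq (congrArg sSup (Set.ext fun t => ?_))
    simp [K, x, e, smul_eq_C_mul, mem_preordering]

end Duality

theorem stmt3_general (m n r : ℕ) (hr : 0 < r)
    (μ : Fin m → ℝ) (ν : Fin n → ℝ) (hμ : IsProbVec μ) (hν : IsProbVec ν)
    (L : Fin m → Fin n → Fin m → Fin n → ℝ) :
    lbS m n r μ ν L = valS m n r μ ν L := by
  obtain ⟨z₀, hz₀, hz₀L⟩ := exists_sFeas_objS_le_lbS L hr hμ hν
  obtain ⟨t, ht⟩ := exists_C_add_mem_preordering (r := r) (ν := ν) hμ.2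
    ((totalDegree_Lpoly_le L).trans (by omega))
  have hbound : InPreT m n r μ ν (Lpoly m n L - C (-t)) := by
    rwa [map_neg, sub_neg_eq_add, add_comm]
  have hweak : ∀ c ∈ {c | InPreT m n r μ ν (Lpoly m n L - C c)},
      ∀ v ∈ {v | ∃ z, SFeas m n r μ ν z ∧ v = objS m n L z}, c ≤ v := by
    rintro c hc _ ⟨z, hz, rfl⟩
    exact hz.le_objS L hc
  exact le_antisymm (csSup_le ⟨-t, hbound⟩ fun c hc => le_csInf ⟨_, z₀, hz₀, rfl⟩ (hweak c hc))
    ((csInf_le ⟨-t, hweak _ hbound⟩ ⟨z₀, hz₀, rfl⟩).trans hz₀L)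

/-- Strong duality for the Schmüdgen-type hierarchy of the discrete
Gromov-Wasserstein problem: lb(L, T(Π(μ,ν)))_r = val(S-DGW-r). -/
theorem stmt3 (m n r : ℕ) (hm : 0 < m) (hn : 0 < n) (hr : 0 < r)
    (μ : Fin m → ℝ) (ν : Fin n → ℝ) (hμ : IsProbVec μ) (hν : IsProbVec ν)
    (L : Fin m → Fin n → Fin m → Fin n → ℝ) :
    lbS m n r μ ν L = valS m n r μ ν L :=
  stmt3_general m n r hr μ ν hμ hν L
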